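/- Let G be the presented group with generators α, α′, δ and relations αα′α = α′αα′, αδ = δα, α′δ = δα′, α²α′²δ² = 1, together with the additional braid relation αδα = δαδ. Then G is abelian. -/

import Mathlib

/-- The relations of the reduced braid group `B̄₃`:
`σ₁σ₂σ₁ = σ₂σ₁σ₂` and `(σ₁σ₂)³ = 1`. -/
def bbar3Rels : Set (FreeGroup (Fin 2)) :=
  { FreeGroup.of 0 * FreeGroup.of 1 * FreeGroup.of 0 *
      (FreeGroup.of 1 * FreeGroup.of 0 * FreeGroup.of 1)⁻¹,
    (FreeGroup.of 0 * FreeGroup.of 1) ^ 3 }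

/-- The reduced braid group `B̄₃ = ⟨σ₁, σ₂ ∣ σ₁σ₂σ₁ = σ₂σ₁σ₂, (σ₁σ₂)³ = 1⟩`. -/
abbrev Bbar3 : Type := PresentedGroup bbar3Rels

/-- The generator `σ₁` of `B̄₃`. -/
def σ1 : Bbar3 := PresentedGroup.of 0

/-- The generator `σ₂` of `B̄₃`. -/
def σ2 : Bbar3 := PresentedGroup.of 1

namespace Stmt

def a : FreeGroup (Fin 3) := FreeGroup.of 0
def a' : FreeGroup (Fin 3) := FreeGroup.of 1
def d : FreeGroup (Fin 3) := FreeGroup.of 2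

/-- The set of relators. -/
def rels : Set (FreeGroup (Fin 3)) :=
  { a * a' * a * (a' * a * a')⁻¹,
    (a) * (d) * (a)⁻¹ * (d)⁻¹,
    (a') * (d) * (a')⁻¹ * (d)⁻¹,
    a ^ 2 * a' ^ 2 * d ^ 2,
    a * d * a * (d * a * d)⁻¹ }

end Stmt

namespace Stmt15Aux

abbrev G := PresentedGroup Stmt.rels

def A : G := PresentedGroup.of 0
def A' : G := PresentedGroup.of 1
def D : G := PresentedGroup.of 2

lemma rel_one : ∀ r ∈ Stmt.rels, (QuotientGroup.mk r : G) = 1 := fun r hr =>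
  (QuotientGroup.eq_one_iff r).mpr (Subgroup.subset_normalClosure hr)

lemma mk_of (i : Fin 3) :
    (QuotientGroup.mk (FreeGroup.of i) : G) = PresentedGroup.of i := rfl

lemma hAD : A * D = D * A := by
  have h := rel_one _ (by simp [Stmt.rels] :
    Stmt.a * Stmt.d * Stmt.a⁻¹ * Stmt.d⁻¹ ∈ Stmt.rels)
  simp only [Stmt.a, Stmt.d, QuotientGroup.mk_mul, QuotientGroup.mk_inv, mk_of] at h
  rw [show A = PresentedGroup.of (0 : Fin 3) from rfl,
      show D = PresentedGroup.of (2 : Fin 3) from rfl]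
  replace h : (PresentedGroup.of (0 : Fin 3) : G) * PresentedGroup.of (2 : Fin 3) *
      (PresentedGroup.of (0 : Fin 3))⁻¹ * (PresentedGroup.of (2 : Fin 3))⁻¹ = 1 := h
  rw [mul_inv_eq_one] at h
  exact mul_inv_eq_iff_eq_mul.mp h

lemma hA'D : A' * D = D * A' := by
  have h := rel_one _ (by simp [Stmt.rels] :
    Stmt.a' * Stmt.d * Stmt.a'⁻¹ * Stmt.d⁻¹ ∈ Stmt.rels)
  simp only [Stmt.a', Stmt.d, QuotientGroup.mk_mul, QuotientGroup.mk_inv, mk_of] at h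
  rw [show A' = PresentedGroup.of (1 : Fin 3) from rfl,
      show D = PresentedGroup.of (2 : Fin 3) from rfl]
  replace h : (PresentedGroup.of (1 : Fin 3) : G) * PresentedGroup.of (2 : Fin 3) *
      (PresentedGroup.of (1 : Fin 3))⁻¹ * (PresentedGroup.of (2 : Fin 3))⁻¹ = 1 := h
  rw [mul_inv_eq_one] at h
  exact mul_inv_eq_iff_eq_mul.mp h

lemma hBraidAD : A * D * A = D * A * D := by
  have h := rel_one _ (by simp [Stmt.rels] :
    Stmt.a * Stmt.d * Stmt.a * (Stmt.d * Stmt.a * Stmt.d)⁻¹ ∈ Stmt.rels)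
  simp only [Stmt.a, Stmt.d, QuotientGroup.mk_mul, QuotientGroup.mk_inv, mk_of] at h
  rw [show A = PresentedGroup.of (0 : Fin 3) from rfl,
      show D = PresentedGroup.of (2 : Fin 3) from rfl]
  rw [mul_inv_eq_iff_eq_mul, one_mul] at h
  exact h

lemma hBraidAA' : A * A' * A = A' * A * A' := by
  have h := rel_one _ (by simp [Stmt.rels] :
    Stmt.a * Stmt.a' * Stmt.a * (Stmt.a' * Stmt.a * Stmt.a')⁻¹ ∈ Stmt.rels)
  simp only [Stmt.a, Stmt.a', QuotientGroup.mk_mul, QuotientGroup.mk_inv, mk_of] at h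
  rw [show A = PresentedGroup.of (0 : Fin 3) from rfl,
      show A' = PresentedGroup.of (1 : Fin 3) from rfl]
  rw [mul_inv_eq_iff_eq_mul, one_mul] at h
  exact h

lemma hDA : D = A := by
  have h := hBraidAD
  rw [hAD] at h
  -- D * A * A = D * A * D
  have : A = D := mul_left_cancel (a := D * A) (by simpa [mul_assoc] using h)
  exact this.symm

lemma hA'A : A' = A := by
  have hc : A' * A = A * A' := by rw [← hDA]; exact (hA'D)
  have h := hBraidAA'
  have h2 : A * (A * A') = A * (A' * A') := by
    calc A * (A * A') = A * (A' * A) := by rw [hc]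
    _ = A' * A * A' := by rw [← mul_assoc]; exact h
    _ = A * A' * A' := by rw [hc]
    _ = A * (A' * A') := by rw [mul_assoc]
  exact (mul_right_cancel (mul_left_cancel h2)).symm

lemma mem_zpowers (x : G) : x ∈ Subgroup.zpowers A := by
  obtain ⟨w, rfl⟩ := QuotientGroup.mk_surjective x
  induction w using FreeGroup.induction_on with
  | C1 => exact Subgroup.one_mem _
  | of i =>
      show (QuotientGroup.mk (FreeGroup.of i) : G) ∈ Subgroup.zpowers A
      rw [mk_of]
      fin_cases i
      · exact Subgroup.mem_zpowers A
      · show A' ∈ Subgroup.zpowers A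
        rw [hA'A]
        exact Subgroup.mem_zpowers A
      · show D ∈ Subgroup.zpowers A
        rw [hDA]
        exact Subgroup.mem_zpowers A
  | inv_of i h => rw [QuotientGroup.mk_inv]; exact Subgroup.inv_mem _ h
  | mul x y hx hy => rw [QuotientGroup.mk_mul]; exact Subgroup.mul_mem _ hx hy

end Stmt15Aux

/-- The group `⟨α, α', δ ∣ αα'α = α'αα', [α,δ] = [α',δ] = 1, α²α'²δ² = 1⟩` together with
the braid relation `αδα = δαδ` is abelian. -/
theorem stmt15 : ∀ x y : PresentedGroup Stmt.rels, x * y = y * x := by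
  intro x y
  obtain ⟨m, hm⟩ := Stmt15Aux.mem_zpowers x
  obtain ⟨n, hn⟩ := Stmt15Aux.mem_zpowers y
  rw [← hm, ← hn]
  exact zpow_mul_comm _ m n
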